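/- arXiv:1312.6465 — 2 statements merged into one kernel-verified Lean document; each statement's English description precedes it below -/
import Mathlib

section
/- Let p : Γ̃ → Γ be a universal cover of a finite connected simple graph Γ, with a fixed linear order on V(Γ̃). Let T′ be a finite induced subgraph of Γ̃ and let T be an induced subgraph of T′. Then for every w ∈ G(Γ) one has supp(φ(Γ,T)(w)) ⊆ supp(φ(Γ,T′)(w)); in particular, ker φ(Γ,T′) ⊆ ker φ(Γ,T). -/
/-! Right-angled Artin groups in the "opposite" convention:
generators are vertices, and two generators commute iff the vertices are NOT adjacent. -/

/-- The commutation relators for the right-angled Artin group (opposite convention):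
one commutator for each pair of distinct non-adjacent vertices. -/
def raagRels {V : Type*} (Γ : SimpleGraph V) : Set (FreeGroup V) :=
  {r | ∃ u v : V, u ≠ v ∧ ¬ Γ.Adj u v ∧
    r = FreeGroup.of u * FreeGroup.of v * (FreeGroup.of u)⁻¹ * (FreeGroup.of v)⁻¹}

/-- The right-angled Artin group `G(Γ)` (opposite convention). -/
abbrev Raag {V : Type*} (Γ : SimpleGraph V) : Type _ := PresentedGroup (raagRels Γ)

/-- The vertex generators of `G(Γ)`. -/
abbrev Raag.of {V : Type*} (Γ : SimpleGraph V) (v : V) : Raag Γ := PresentedGroup.of v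

/-- The element of `G(Γ)` represented by a word: a list of letters, where the letter `(v, b)`
stands for `v` if `b = true` and for `v⁻¹` if `b = false`. -/
def wordProd {V : Type*} (Γ : SimpleGraph V) (w : List (V × Bool)) : Raag Γ :=
  (w.map fun l => if l.2 then Raag.of Γ l.1 else (Raag.of Γ l.1)⁻¹).prod

/-- A word is reduced if no shorter word represents the same element of `G(Γ)`. -/
def IsReducedWord {V : Type*} (Γ : SimpleGraph V) (w : List (V × Bool)) : Prop :=
  ∀ w' : List (V × Bool), wordProd Γ w' = wordProd Γ w → w.length ≤ w'.length

/-- The word length of `g` with respect to a generating set `S` of a group: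
the least length of a list of elements of `S ∪ S⁻¹` whose product is `g`. -/
noncomputable def wordLength {G : Type*} [Group G] (S : Set G) (g : G) : ℕ :=
  sInf {n | ∃ l : List G, (∀ x ∈ l, x ∈ S ∨ x⁻¹ ∈ S) ∧ l.prod = g ∧ l.length = n}

/-- The (right-invariant) word metric associated to a generating set. -/
noncomputable def wordDist {G : Type*} [Group G] (S : Set G) (x y : G) : ℝ :=
  (wordLength S (y * x⁻¹) : ℝ)

/-- Word length in `G(Γ)` with respect to the vertex generating set. -/
noncomputable def raagNorm {V : Type*} (Γ : SimpleGraph V) (g : Raag Γ) : ℕ :=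
  wordLength (Set.range (Raag.of Γ)) g

/-- The word metric on `G(Γ)` with respect to the vertex generating set. -/
noncomputable def raagDist {V : Type*} (Γ : SimpleGraph V) (x y : Raag Γ) : ℝ :=
  wordDist (Set.range (Raag.of Γ)) x y

/-- A quasi-isometric group embedding: an injective group homomorphism which
is a quasi-isometric embedding with respect to the given metrics. -/
def IsQIEmbedding {G H : Type*} [Group G] [Group H] (f : G →* H)
    (dG : G → G → ℝ) (dH : H → H → ℝ) : Prop :=
  Function.Injective f ∧ ∃ C : ℝ, 1 ≤ C ∧ ∀ x y : G,
    dG x y / C - C ≤ dH (f x) (f y) ∧ dH (f x) (f y) ≤ C * dG x y + C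

/-- The support of `g ∈ G(Γ)`: vertices occurring in some reduced word representing `g`. -/
def raagSupp {V : Type*} (Γ : SimpleGraph V) (g : Raag Γ) : Set V :=
  {v | ∃ w : List (V × Bool), IsReducedWord Γ w ∧ wordProd Γ w = g ∧ ∃ b, (v, b) ∈ w}

/-- A cancellation of the vertex `v` in the word `w`: a subword `v^{±1} w' v^{∓1}` where the
support of the element represented by `w'` is disjoint from the link of `v`. -/
def HasCancellationOf {V : Type*} (Γ : SimpleGraph V) (w : List (V × Bool)) (v : V) : Prop :=
  ∃ (w₁ w' w₂ : List (V × Bool)) (b : Bool),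
    w = w₁ ++ (v, b) :: (w' ++ (v, !b) :: w₂) ∧
    ∀ u ∈ raagSupp Γ (wordProd Γ w'), ¬ Γ.Adj v u

/-- An innermost cancellation of the vertex `v` in the word `w`: a cancellation
`v^{±1} w' v^{∓1}` in which moreover no letter of `w'` involves `v`. -/
def HasInnermostCancellationOf {V : Type*} (Γ : SimpleGraph V) (w : List (V × Bool)) (v : V) :
    Prop :=
  ∃ (w₁ w' w₂ : List (V × Bool)) (b : Bool),
    w = w₁ ++ (v, b) :: (w' ++ (v, !b) :: w₂) ∧
    (∀ u ∈ raagSupp Γ (wordProd Γ w'), ¬ Γ.Adj v u) ∧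
    ∀ b' : Bool, (v, b') ∉ w'

/-- A covering of simple graphs: a graph homomorphism which is bijective on neighbor sets. -/
structure IsGraphCovering {V' V : Type*} (Γ' : SimpleGraph V') (Γ : SimpleGraph V)
    (p : V' → V) : Prop where
  adj : ∀ {x y : V'}, Γ'.Adj x y → Γ.Adj (p x) (p y)
  bijOn : ∀ x : V', Set.BijOn p (Γ'.neighborSet x) (Γ.neighborSet (p x))

/-- A universal cover of a connected graph `Γ`: a covering whose total graph is a tree. -/
def IsUniversalCover {V' V : Type*} (Γ' : SimpleGraph V') (Γ : SimpleGraph V)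
    (p : V' → V) : Prop :=
  IsGraphCovering Γ' Γ p ∧ Γ'.IsTree

section Phi

variable {V' V : Type*} [LinearOrder V'] [DecidableEq V]

/-- The lifts in `T` of a vertex `v`, listed in increasing order. -/
def liftVerts (p : V' → V) (T : Finset V') (v : V) : List V' :=
  (T.filter fun t => p t = v).sort (· ≤ ·)

/-- The lifts in `T` of a vertex `v`, in increasing order, as vertices of the induced subgraph. -/
def liftSubVerts (p : V' → V) (T : Finset V') (v : V) : List (↥(T : Set V')) :=
  (liftVerts p T v).pmap (fun t ht => (⟨t, ht⟩ : ↥(T : Set V')))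
    (fun t ht => by
      have : t ∈ T := (Finset.mem_filter.mp ((Finset.mem_sort _).mp ht)).1
      exact Finset.mem_coe.mpr this)

/-- `φ(Γ,T)` sends each vertex `v` of `Γ` to the product, in increasing order,
of the lifts of `v` lying in `T`.  This predicate singles out the homomorphism `φ(Γ,T)`. -/
def IsPhi (Γ : SimpleGraph V) (Γ' : SimpleGraph V') (p : V' → V) (T : Finset V')
    (φ : Raag Γ →* Raag (Γ'.induce (T : Set V'))) : Prop :=
  ∀ v : V, φ (Raag.of Γ v) =
    ((liftSubVerts p T v).map (Raag.of (Γ'.induce (T : Set V')))).prod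

/-- The `φ(Γ,T)`-homomorphic word of a word `w`: each letter `x^{e}` of `w` is replaced by the
word `(t₁ t₂ ⋯ t_k)^{e}` where `t₁ < t₂ < ⋯ < t_k` are the lifts of `x` lying in `T`. -/
def homWord (p : V' → V) (T : Finset V') (w : List (V × Bool)) :
    List (↥(T : Set V') × Bool) :=
  w.flatMap fun l =>
    if l.2 then (liftSubVerts p T l.1).map (fun t => (t, true))
    else ((liftSubVerts p T l.1).reverse).map (fun t => (t, false))

/-- `φ(Γ,T)` is `F`-surviving: for every reduced word `w` in `G(Γ)` and every `v ∈ F`, the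
`φ(Γ,T)`-homomorphic word of `w` has no cancellation of `v`. -/
def IsSurviving (Γ : SimpleGraph V) (Γ' : SimpleGraph V') (p : V' → V) (T : Finset V')
    (F : Set V') : Prop :=
  ∀ w : List (V × Bool), IsReducedWord Γ w →
    ∀ (v : V') (hv : v ∈ (T : Set V')), v ∈ F →
      ¬ HasCancellationOf (Γ'.induce (T : Set V')) (homWord p T w) ⟨v, hv⟩

end Phi

/-!
Deleting the generators outside `T` is a retraction `ρ : G(Γ̃[T′]) → G(Γ̃[T])`, and
`ρ ∘ φ(Γ,T′) = φ(Γ,T)` because the lifts of `v` in `T`, in increasing order, are exactly the lifts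
of `v` in `T′` that lie in `T`. The kernel inclusion is immediate. For supports, `ρ` turns a reduced
word for `φ(Γ,T′)(w)` into some word for `φ(Γ,T)(w)`, and a vertex of the support of an element
occurs in every word representing it: otherwise killing that vertex would shorten a reduced word.
-/

namespace Raag

variable {A : Type*} {Δ : SimpleGraph A}

theorem of_commute {u v : A} (huv : u ≠ v) (hadj : ¬ Δ.Adj u v) :
    Commute (Raag.of Δ u) (Raag.of Δ v) := by
  rw [← commutatorElement_eq_one_iff_commute]
  exact PresentedGroup.one_of_mem ⟨u, v, huv, hadj, by simp⟩

variable {H : Type*} [Group H]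

def lift (f : A → H) (hf : ∀ u v, u ≠ v → ¬ Δ.Adj u v → Commute (f u) (f v)) : Raag Δ →* H :=
  PresentedGroup.toGroup (f := f) (rels := raagRels Δ) (by
    rintro r ⟨u, v, huv, hadj, rfl⟩
    simpa [← commutatorElement_def, commutatorElement_eq_one_iff_commute] using hf u v huv hadj)

theorem lift_of (f : A → H) (hf : ∀ u v, u ≠ v → ¬ Δ.Adj u v → Commute (f u) (f v)) (v : A) :
    lift f hf (Raag.of Δ v) = f v :=
  PresentedGroup.toGroup.of _

end Raag

section Words

variable {A : Type*} {Δ : SimpleGraph A}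

theorem wordProd_cons (l : A × Bool) (w : List (A × Bool)) :
    wordProd Δ (l :: w) = (if l.2 then Raag.of Δ l.1 else (Raag.of Δ l.1)⁻¹) * wordProd Δ w := by
  simp [wordProd]

theorem PresentedGroup.mk_freeGroupMk_eq_wordProd (w : List (A × Bool)) :
    PresentedGroup.mk (raagRels Δ) (FreeGroup.mk w) = wordProd Δ w := by
  have : PresentedGroup.mk (raagRels Δ) = FreeGroup.lift PresentedGroup.of :=
    FreeGroup.ext_hom _ _ fun _ => rfl
  simp [this, FreeGroup.lift_mk, wordProd, Bool.cond_eq_ite]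

theorem wordProd_surjective : Function.Surjective (wordProd Δ) := by
  classical
  intro g
  obtain ⟨x, rfl⟩ := PresentedGroup.mk_surjective _ g
  exact ⟨x.toWord, by rw [← PresentedGroup.mk_freeGroupMk_eq_wordProd, FreeGroup.mk_toWord]⟩

theorem exists_isReducedWord (g : Raag Δ) : ∃ w, IsReducedWord Δ w ∧ wordProd Δ w = g := by
  classical
  have hex : ∃ n, ∃ w : List (A × Bool), wordProd Δ w = g ∧ w.length = n :=
    let ⟨w, hw⟩ := wordProd_surjective g; ⟨w.length, w, hw, rfl⟩
  obtain ⟨w, hwg, hlen⟩ := Nat.find_spec hex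
  exact ⟨w, fun w' hw' => hlen ▸ Nat.find_min' hex ⟨w', hw'.trans hwg, rfl⟩, hwg⟩

end Words

namespace Raag

variable {A : Type*} [DecidableEq A] {Δ : SimpleGraph A}

def kill (Δ : SimpleGraph A) (x : A) : Raag Δ →* Raag Δ :=
  lift (fun y => if y = x then 1 else Raag.of Δ y) fun u v huv hadj => by
    by_cases hu : u = x <;> by_cases hv : v = x <;> simp [hu, hv, of_commute huv hadj]

theorem kill_of (x y : A) : kill Δ x (Raag.of Δ y) = if y = x then 1 else Raag.of Δ y :=
  lift_of _ _ y

theorem kill_wordProd (x : A) (w : List (A × Bool)) :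
    kill Δ x (wordProd Δ w) = wordProd Δ (w.filter fun l => l.1 ≠ x) := by
  induction w with
  | nil => simp [wordProd]
  | cons l w ih =>
    rw [wordProd_cons, map_mul, ih]
    by_cases hl : l.1 = x <;> cases hb : l.2 <;> simp [wordProd_cons, hl, hb, kill_of]

end Raag

/-- Killing `x` fixes an element with a word avoiding `x` but shortens every word through `x`. -/
theorem exists_mem_of_mem_raagSupp {A : Type*} {Δ : SimpleGraph A} {g : Raag Δ} {x : A}
    (hx : x ∈ raagSupp Δ g) {a : List (A × Bool)} (ha : wordProd Δ a = g) : ∃ b, (x, b) ∈ a := by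
  classical
  by_contra! hax
  obtain ⟨w, hw, hwg, b, hb⟩ := hx
  have hfix : Raag.kill Δ x g = g := by
    rw [← ha, Raag.kill_wordProd, List.filter_eq_self.mpr]
    rintro ⟨y, c⟩ hy
    simpa using fun hyx : y = x => hax c (hyx ▸ hy)
  have hshort := hw (w.filter fun l => l.1 ≠ x) (by rw [← Raag.kill_wordProd, hwg, hfix])
  have hlt : (w.filter fun l => l.1 ≠ x).length < w.length :=
    List.length_filter_lt_length_iff_exists.mpr ⟨(x, b), hb, by simp⟩
  omega

namespace Raag

variable {V' : Type*} (G : SimpleGraph V') (s t : Set V') [DecidablePred (· ∈ s)]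

def restrict : Raag (G.induce t) →* Raag (G.induce s) :=
  lift (fun u => if h : (u : V') ∈ s then Raag.of _ ⟨u, h⟩ else 1) fun u v huv hadj => by
    by_cases hu : (u : V') ∈ s <;> by_cases hv : (v : V') ∈ s <;> simp only [hu, hv, dite_true,
      dite_false, Commute.one_left, Commute.one_right]
    exact of_commute (fun h => huv (Subtype.val_injective (Subtype.mk.inj h))) hadj

variable {t}

def restrictWord (u : List (t × Bool)) : List (s × Bool) :=
  u.filterMap fun l => if h : (l.1 : V') ∈ s then some (⟨l.1, h⟩, l.2) else none

theorem restrict_of (u : t) :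
    restrict G s t (Raag.of _ u) = if h : (u : V') ∈ s then Raag.of _ ⟨u, h⟩ else 1 :=
  lift_of _ _ u

theorem restrict_wordProd (u : List (t × Bool)) :
    restrict G s t (wordProd _ u) = wordProd _ (restrictWord s u) := by
  induction u with
  | nil => simp [wordProd, restrictWord]
  | cons l u ih =>
    rw [wordProd_cons, map_mul, ih]
    by_cases hl : (l.1 : V') ∈ s <;> cases hb : l.2 <;>
      simp [restrictWord, wordProd_cons, hl, hb, restrict_of]

theorem exists_mem_raagSupp_of_mem_raagSupp_restrict {g : Raag (G.induce t)} {x : V'}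
    (hx : x ∈ s) (hsupp : ⟨x, hx⟩ ∈ raagSupp (G.induce s) (restrict G s t g)) :
    ∃ hx' : x ∈ t, ⟨x, hx'⟩ ∈ raagSupp (G.induce t) g := by
  obtain ⟨u, hu, rfl⟩ := exists_isReducedWord g
  obtain ⟨b, hb⟩ := exists_mem_of_mem_raagSupp hsupp (restrict_wordProd G s u).symm
  obtain ⟨⟨⟨y, hyt⟩, c⟩, hl, hyx⟩ := List.mem_filterMap.mp hb
  by_cases hys : y ∈ s
  · simp only [hys, dite_true, Option.some.injEq, Prod.mk.injEq, Subtype.mk.injEq] at hyx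
    obtain ⟨rfl, -⟩ := hyx
    exact ⟨hyt, u, hu, rfl, c, hl⟩
  · simp [hys] at hyx

end Raag

theorem Finset.sort_filter {α : Type*} [LinearOrder α] (s : Finset α) (p : α → Prop)
    [DecidablePred p] : (s.sort (· ≤ ·)).filter p = (s.filter p).sort (· ≤ ·) :=
  List.Perm.eq_of_pairwise' ((s.pairwise_sort _).filter _) ((s.filter p).pairwise_sort _)
    (by rw [← Multiset.coe_eq_coe, ← Multiset.filter_coe, Finset.sort_eq, Finset.sort_eq]; rfl)

theorem List.prod_map_filter_of_eq_one {α M : Type*} [Monoid M] (p : α → Bool) (f : α → M)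
    (l : List α) (hf : ∀ a ∈ l, p a = false → f a = 1) :
    ((l.filter p).map f).prod = (l.map f).prod := by
  induction l with
  | nil => rfl
  | cons a l ih =>
    have ih := ih fun b hb => hf b (mem_cons_of_mem a hb)
    cases hp : p a
    · simp [hp, ih, hf a mem_cons_self hp]
    · simp [hp, ih]

section Phi

variable {V' V : Type*} [LinearOrder V'] [DecidableEq V] {p : V' → V} {T T' : Finset V'}

theorem liftVerts_filter_mem (hTT' : T ⊆ T') (v : V) :
    (liftVerts p T' v).filter (· ∈ T) = liftVerts p T v := by
  rw [liftVerts, liftVerts, Finset.sort_filter, Finset.filter_filter]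
  congr 1
  ext a
  simp only [Finset.mem_filter]
  exact ⟨fun ⟨_, hv, hT⟩ => ⟨hT, hv⟩, fun ⟨hT, hv⟩ => ⟨hTT' hT, hv, hT⟩⟩

theorem IsPhi.restrict_comp {Γ : SimpleGraph V} {Γ' : SimpleGraph V'}
    {φT : Raag Γ →* Raag (Γ'.induce (T : Set V'))}
    {φT' : Raag Γ →* Raag (Γ'.induce (T' : Set V'))}
    (hφT : IsPhi Γ Γ' p T φT) (hφT' : IsPhi Γ Γ' p T' φT') (hTT' : T ⊆ T') :
    (Raag.restrict Γ' T T').comp φT' = φT := by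
  refine PresentedGroup.ext fun v => ?_
  let g : V' → Raag (Γ'.induce (T : Set V')) := fun a =>
    if h : a ∈ (T : Set V') then Raag.of _ ⟨a, h⟩ else 1
  have hT' : ((liftSubVerts p T' v).map (Raag.restrict Γ' T T' ∘ Raag.of _)) =
      (liftVerts p T' v).map g := by
    rw [liftSubVerts, List.map_pmap, ← List.pmap_eq_map (fun _ h => h)]
    exact List.pmap_congr_left _ fun a _ _ _ => Raag.restrict_of _ _ _
  have hT : (liftSubVerts p T v).map (Raag.of _) = (liftVerts p T v).map g := by
    rw [liftSubVerts, List.map_pmap, ← List.pmap_eq_map (fun _ h => h)]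
    exact List.pmap_congr_left _ fun a _ h _ => by simp only [g, dif_pos h]
  rw [MonoidHom.comp_apply, hφT' v, hφT v, map_list_prod, List.map_map, hT', hT,
    ← liftVerts_filter_mem hTT', List.prod_map_filter_of_eq_one]
  intro a _ ha
  exact dif_neg (by simpa using ha)

end Phi

theorem supp_phi_mono_and_ker_le_general {V V' : Type} [DecidableEq V] [LinearOrder V']
    (Γ : SimpleGraph V)
    (Γ' : SimpleGraph V') (p : V' → V)
    (T T' : Finset V') (hTT' : T ⊆ T')
    (φT : Raag Γ →* Raag (Γ'.induce (T : Set V')))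
    (φT' : Raag Γ →* Raag (Γ'.induce (T' : Set V')))
    (hφT : IsPhi Γ Γ' p T φT) (hφT' : IsPhi Γ Γ' p T' φT') :
    (∀ (w : Raag Γ) (x : V') (hx : x ∈ (T : Set V')),
      (⟨x, hx⟩ : ↥(T : Set V')) ∈ raagSupp (Γ'.induce (T : Set V')) (φT w) →
        ∃ hx' : x ∈ (T' : Set V'),
          (⟨x, hx'⟩ : ↥(T' : Set V')) ∈ raagSupp (Γ'.induce (T' : Set V')) (φT' w)) ∧
    (∀ w : Raag Γ, φT' w = 1 → φT w = 1) := by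
  have hrestrict (w : Raag Γ) : Raag.restrict Γ' T T' (φT' w) = φT w :=
    DFunLike.congr_fun (hφT.restrict_comp hφT' hTT') w
  refine ⟨fun w x hx hsupp => ?_, fun w hw => ?_⟩
  · rw [← hrestrict] at hsupp
    exact Raag.exists_mem_raagSupp_of_mem_raagSupp_restrict Γ' _ hx hsupp
  · rw [← hrestrict, hw, map_one]

/-- For a universal cover `p : Γ̃ → Γ` of a finite connected graph with ordered
vertex set, and finite induced subgraphs `T ≤ T′` of `Γ̃`: for every `w ∈ G(Γ)` one has
`supp(φ(Γ,T)(w)) ⊆ supp(φ(Γ,T′)(w))` (as subsets of `V(Γ̃)`); in particular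
`ker φ(Γ,T′) ⊆ ker φ(Γ,T)`. -/
theorem supp_phi_mono_and_ker_le {V V' : Type} [Fintype V] [DecidableEq V] [LinearOrder V']
    (Γ : SimpleGraph V) (hΓ : Γ.Connected)
    (Γ' : SimpleGraph V') (p : V' → V) (hp : IsUniversalCover Γ' Γ p)
    (T T' : Finset V') (hTT' : T ⊆ T')
    (φT : Raag Γ →* Raag (Γ'.induce (T : Set V')))
    (φT' : Raag Γ →* Raag (Γ'.induce (T' : Set V')))
    (hφT : IsPhi Γ Γ' p T φT) (hφT' : IsPhi Γ Γ' p T' φT') :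
    (∀ (w : Raag Γ) (x : V') (hx : x ∈ (T : Set V')),
      (⟨x, hx⟩ : ↥(T : Set V')) ∈ raagSupp (Γ'.induce (T : Set V')) (φT w) →
        ∃ hx' : x ∈ (T' : Set V'),
          (⟨x, hx'⟩ : ↥(T' : Set V')) ∈ raagSupp (Γ'.induce (T' : Set V')) (φT' w)) ∧
    (∀ w : Raag Γ, φT' w = 1 → φT w = 1) :=
  supp_phi_mono_and_ker_le_general Γ Γ' p T T' hTT' φT φT' hφT hφT'
end

section
/- Let Γ be a finite simple graph, let w be a word in the letters V(Γ) ∪ V(Γ)⁻¹ representing the element g ∈ G(Γ), and let v be a vertex such that v or v⁻¹ occurs as a letter of w but v ∉ supp(g). Then w contains a cancellation of v, and hence an innermost cancellation of v. Consequently, every non-reduced word in the letters V(Γ) ∪ V(Γ)⁻¹ contains an innermost cancellation of some vertex. -/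
/-! Normalize a word from right to left: putting a letter `l` in front of a word either cancels
it against the first copy of `l⁻¹` that can be shuffled to the front, past letters whose vertices
are not adjacent to that of `l`, or prepends it. On shuffle classes of words in which no letter can
be shuffled next to its inverse, these moves satisfy the defining relations of `G(Γ)` (van der
Waerden's trick), so the normal form of a word depends only on the element `g` it represents.
Hence it is a reduced word for `g`, and its letters occur in every word representing `g`.

If `v` occurs in `w` but not in `supp(g)`, some `v`-letter of `w` is cancelled during
normalization. At the rightmost such cancellation the partner is the first `v`-letter of the
remaining suffix, and each letter in between either survives to the left of that partner, hence
shuffles past it, or was cancelled against a letter that shuffles past it; so the letters in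
between represent an element whose support misses `lk(v)`. For a non-reduced word, the rightmost
cancellation of any letter gives the same picture. -/

namespace Raag

open List

variable {V : Type*} (Γ : SimpleGraph V)

def letter (l : V × Bool) : Raag Γ :=
  if l.2 then Raag.of Γ l.1 else (Raag.of Γ l.1)⁻¹

@[simp] theorem wordProd_nil : wordProd Γ [] = 1 := rfl

@[simp] theorem wordProd_cons (l : V × Bool) (w : List (V × Bool)) :
    wordProd Γ (l :: w) = letter Γ l * wordProd Γ w :=
  prod_cons

@[simp] theorem wordProd_append (w w' : List (V × Bool)) :
    wordProd Γ (w ++ w') = wordProd Γ w * wordProd Γ w' := by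
  simp [wordProd]

theorem letter_not (v : V) (b : Bool) : letter Γ (v, !b) = (letter Γ (v, b))⁻¹ := by
  cases b <;> simp [letter]

theorem commute_of_not_adj {u v : V} (h : ¬ Γ.Adj u v) :
    Commute (Raag.of Γ u) (Raag.of Γ v) := by
  obtain rfl | hne := eq_or_ne u v
  · exact Commute.refl _
  have hrel := PresentedGroup.one_of_mem (show _ ∈ raagRels Γ from ⟨u, v, hne, h, rfl⟩)
  simp only [map_mul, map_inv] at hrel
  exact commutatorElement_eq_one_iff_commute.mp hrel

theorem commute_letter {l l' : V × Bool} (h : ¬ Γ.Adj l.1 l'.1) :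
    Commute (letter Γ l) (letter Γ l') := by
  have := commute_of_not_adj Γ h
  unfold letter
  split_ifs <;> simpa

def CommutesWith (v : V) (w : List (V × Bool)) : Prop :=
  ∀ l ∈ w, ¬ Γ.Adj v l.1

variable {Γ}

@[simp] theorem commutesWith_nil (v : V) : CommutesWith Γ v [] := by
  simp [CommutesWith]

@[simp] theorem commutesWith_cons {v : V} {l : V × Bool} {w : List (V × Bool)} :
    CommutesWith Γ v (l :: w) ↔ ¬ Γ.Adj v l.1 ∧ CommutesWith Γ v w :=
  forall_mem_cons

@[simp] theorem commutesWith_append {v : V} {w w' : List (V × Bool)} :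
    CommutesWith Γ v (w ++ w') ↔ CommutesWith Γ v w ∧ CommutesWith Γ v w' :=
  forall_mem_append

theorem CommutesWith.commute_wordProd {l : V × Bool} {w : List (V × Bool)}
    (h : CommutesWith Γ l.1 w) : Commute (letter Γ l) (wordProd Γ w) :=
  Commute.list_prod_right _ _ fun _ hx => by
    obtain ⟨l', hl', rfl⟩ := mem_map.1 hx
    exact commute_letter Γ (h l' hl')

theorem exists_first_vertex {v : V} {β : Bool} {w : List (V × Bool)} (h : (v, β) ∈ w) :
    ∃ s δ t, w = s ++ (v, δ) :: t ∧ ∀ β, (v, β) ∉ s := by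
  induction w with
  | nil => simp at h
  | cons c w ih =>
    by_cases hc : c.1 = v
    · exact ⟨[], c.2, w, by rw [← hc]; rfl, by simp⟩
    · have hne : ∀ β, (v, β) ≠ c := fun β h' => hc (congrArg Prod.fst h').symm
      obtain ⟨s, δ, t, rfl, hs⟩ := ih ((mem_cons.1 h).resolve_left (hne β))
      exact ⟨c :: s, δ, t, rfl, fun β hβ => (mem_cons.1 hβ).elim (hne β) (hs β)⟩

theorem append_cons_inj_of_forall_not_mem {v : V} {δ ε : Bool} {a b m y : List (V × Bool)}
    (h : a ++ (v, δ) :: b = m ++ (v, ε) :: y) (ha : ∀ β, (v, β) ∉ a)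
    (hm : ∀ β, (v, β) ∉ m) :
    a = m ∧ δ = ε := by
  rcases append_eq_append_iff.1 h with ⟨_ | ⟨e, t⟩, rfl, h'⟩ | ⟨_ | ⟨e, t⟩, rfl, h'⟩
  · exact ⟨(append_nil a).symm, (Prod.mk.inj (cons.inj h').1).2⟩
  · obtain ⟨rfl, -⟩ := cons.inj h'
    exact absurd (by simp) (hm δ)
  · exact ⟨append_nil m, (Prod.mk.inj (cons.inj h').1).2.symm⟩
  · obtain ⟨rfl, -⟩ := cons.inj h'
    exact absurd (by simp) (ha ε)

variable (Γ) in
def ShufflesToFront (l : V × Bool) (w : List (V × Bool)) : Prop :=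
  ∃ m y, w = m ++ l :: y ∧ CommutesWith Γ l.1 m

theorem not_shufflesToFront_nil (l : V × Bool) : ¬ ShufflesToFront Γ l [] := by
  rintro ⟨m, y, h, -⟩
  simp at h

theorem shufflesToFront_cons_iff {l c : V × Bool} {w : List (V × Bool)} :
    ShufflesToFront Γ l (c :: w) ↔ c = l ∨ ¬ Γ.Adj l.1 c.1 ∧ ShufflesToFront Γ l w := by
  constructor
  · rintro ⟨_ | ⟨c', m⟩, y, h, hm⟩
    · exact .inl (cons.inj h).1
    · obtain ⟨rfl, rfl⟩ := cons.inj h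
      exact .inr ⟨(commutesWith_cons.1 hm).1, m, y, rfl, (commutesWith_cons.1 hm).2⟩
  · rintro (rfl | ⟨hc, m, y, rfl, hm⟩)
    · exact ⟨[], w, rfl, commutesWith_nil _⟩
    · exact ⟨c :: m, y, rfl, commutesWith_cons.2 ⟨hc, hm⟩⟩

theorem ShufflesToFront.insert {l c : V × Bool} {t y : List (V × Bool)}
    (h : ShufflesToFront Γ l (t ++ y)) (hc : ¬ Γ.Adj l.1 c.1) :
    ShufflesToFront Γ l (t ++ c :: y) := by
  induction t with
  | nil => exact shufflesToFront_cons_iff.2 (.inr ⟨hc, h⟩)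
  | cons d t ih =>
    rcases shufflesToFront_cons_iff.1 h with rfl | ⟨hd, h⟩
    · exact shufflesToFront_cons_iff.2 (.inl rfl)
    · exact shufflesToFront_cons_iff.2 (.inr ⟨hd, ih h⟩)

theorem ShufflesToFront.of_append {l : V × Bool} {m y : List (V × Bool)}
    (h : ShufflesToFront Γ l (m ++ y)) (hm : l ∉ m) : ShufflesToFront Γ l y := by
  induction m with
  | nil => exact h
  | cons d m ih =>
    rcases shufflesToFront_cons_iff.1 h with rfl | ⟨-, h⟩
    · exact absurd mem_cons_self hm
    · exact ih h (fun h' => hm (mem_cons_of_mem _ h'))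

theorem shufflesToFront_swap_iff {l a b : V × Bool} (hab : ¬ Γ.Adj a.1 b.1)
    (x y : List (V × Bool)) :
    ShufflesToFront Γ l (x ++ a :: b :: y) ↔ ShufflesToFront Γ l (x ++ b :: a :: y) := by
  induction x with
  | nil =>
    simp only [nil_append, shufflesToFront_cons_iff]
    have hba : ¬ Γ.Adj b.1 a.1 := fun h => hab h.symm
    by_cases ha : a = l <;> by_cases hb : b = l <;> subst_vars <;> tauto
  | cons d x ih => simp only [cons_append, shufflesToFront_cons_iff, ih]

variable (Γ) in
def IsShuffleReduced (w : List (V × Bool)) : Prop :=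
  ∀ x c z, w = x ++ c :: z → ¬ ShufflesToFront Γ (c.1, !c.2) z

theorem isShuffleReduced_nil : IsShuffleReduced Γ [] := by
  intro x c z h
  simp at h

theorem IsShuffleReduced.cons {c : V × Bool} {w : List (V × Bool)} (hw : IsShuffleReduced Γ w)
    (hc : ¬ ShufflesToFront Γ (c.1, !c.2) w) : IsShuffleReduced Γ (c :: w) := by
  rintro (_ | ⟨d, x⟩) c' z h
  · obtain ⟨rfl, rfl⟩ := cons.inj h
    exact hc
  · exact hw x c' z (cons.inj h).2

theorem IsShuffleReduced.delete {c : V × Bool} {m y : List (V × Bool)}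
    (hw : IsShuffleReduced Γ (m ++ c :: y)) (hm : CommutesWith Γ c.1 m) :
    IsShuffleReduced Γ (m ++ y) := by
  intro x d z h hz
  rcases append_eq_append_iff.1 h with ⟨t, rfl, rfl⟩ | ⟨_ | ⟨d', t⟩, rfl, ht⟩
  · exact hw (m ++ c :: t) d z (by simp) hz
  · rw [nil_append] at ht
    subst ht
    exact hw (x ++ [c]) d z (by simp) hz
  · obtain ⟨rfl, rfl⟩ := cons.inj ht
    have hdc : ¬ Γ.Adj d.1 c.1 := fun h' => (commutesWith_append.1 hm).2 d mem_cons_self h'.symm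
    exact hw x d (t ++ c :: y) (by simp) (hz.insert hdc)

variable (Γ) in
def ShuffleStep (w w' : List (V × Bool)) : Prop :=
  ∃ x y a b, ¬ Γ.Adj a.1 b.1 ∧ w = x ++ a :: b :: y ∧ w' = x ++ b :: a :: y

theorem ShuffleStep.perm {w w' : List (V × Bool)} (h : ShuffleStep Γ w w') : w.Perm w' := by
  obtain ⟨x, y, a, b, -, rfl, rfl⟩ := h
  exact (Perm.swap b a y).append_left x

theorem ShuffleStep.cons {w w' : List (V × Bool)} (h : ShuffleStep Γ w w') (c : V × Bool) :
    ShuffleStep Γ (c :: w) (c :: w') := by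
  obtain ⟨x, y, a, b, hab, rfl, rfl⟩ := h
  exact ⟨c :: x, y, a, b, hab, rfl, rfl⟩

theorem ShuffleStep.shufflesToFront_iff {w w' : List (V × Bool)} (h : ShuffleStep Γ w w')
    {l : V × Bool} : ShufflesToFront Γ l w ↔ ShufflesToFront Γ l w' := by
  obtain ⟨x, y, a, b, hab, rfl, rfl⟩ := h
  exact shufflesToFront_swap_iff hab x y

theorem reflTransGen_append_cons {l : V × Bool} {m : List (V × Bool)}
    (hm : CommutesWith Γ l.1 m) (y : List (V × Bool)) :
    Relation.ReflTransGen (ShuffleStep Γ) (m ++ l :: y) (l :: (m ++ y)) := by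
  induction m with
  | nil => exact .refl
  | cons c m ih =>
    obtain ⟨hc, hm⟩ := commutesWith_cons.1 hm
    exact ((ih hm).lift (c :: ·) fun _ _ h => h.cons c).tail
      ⟨[], m ++ y, c, l, fun h => hc h.symm, rfl, rfl⟩

variable (Γ) in
def ReducedClass : Type _ :=
  {q : Quot (ShuffleStep Γ) // ∃ w, IsShuffleReduced Γ w ∧ Quot.mk _ w = q}

variable (Γ) in
def ReducedClass.mk (w : List (V × Bool)) (hw : IsShuffleReduced Γ w) : ReducedClass Γ :=
  ⟨Quot.mk _ w, w, hw, rfl⟩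

section Normalize

variable [DecidableEq V]

theorem ShufflesToFront.exists_first {l : V × Bool} {w : List (V × Bool)}
    (h : ShufflesToFront Γ l w) :
    ∃ m y, w = m ++ l :: y ∧ CommutesWith Γ l.1 m ∧ l ∉ m ∧ w.erase l = m ++ y := by
  induction w with
  | nil => exact absurd h (not_shufflesToFront_nil l)
  | cons c w ih =>
    by_cases hc : c = l
    · subst hc
      exact ⟨[], w, rfl, commutesWith_nil _, not_mem_nil, erase_cons_head _ _⟩
    obtain ⟨hadj, hw⟩ := (shufflesToFront_cons_iff.1 h).resolve_left hc
    obtain ⟨m, y, rfl, hm, hlm, herase⟩ := ih hw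
    refine ⟨c :: m, y, rfl, commutesWith_cons.2 ⟨hadj, hm⟩, ?_, ?_⟩
    · simp [hlm, Ne.symm hc]
    · rw [erase_cons_tail (by simpa using hc), herase, cons_append]

theorem IsShuffleReduced.exists_first {l : V × Bool} {w : List (V × Bool)}
    (hw : IsShuffleReduced Γ w) (h : ShufflesToFront Γ l w) :
    ∃ m y, w = m ++ l :: y ∧ CommutesWith Γ l.1 m ∧ (∀ b, (l.1, b) ∉ m) ∧
      w.erase l = m ++ y := by
  obtain ⟨m, y, rfl, hm, hlm, he⟩ := h.exists_first
  refine ⟨m, y, rfl, hm, fun b hb => ?_, he⟩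
  obtain rfl : b = !l.2 := Bool.eq_not_iff.2 (by rintro rfl; exact hlm hb)
  obtain ⟨m₁, m₂, rfl⟩ := append_of_mem hb
  refine hw m₁ (l.1, !l.2) (m₂ ++ l :: y) (by simp) ⟨m₂, y, by simp, ?_⟩
  exact (commutesWith_cons.1 (commutesWith_append.1 hm).2).2

theorem ShufflesToFront.erase {l c : V × Bool} {w : List (V × Bool)}
    (h : ShufflesToFront Γ l w) (hc : c ≠ l) : ShufflesToFront Γ l (w.erase c) := by
  induction w with
  | nil => exact absurd h (not_shufflesToFront_nil l)
  | cons d w ih =>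
    rw [erase_cons]
    rcases shufflesToFront_cons_iff.1 h with rfl | ⟨hd, h⟩
    · rw [if_neg (by simpa using Ne.symm hc)]
      exact shufflesToFront_cons_iff.2 (.inl rfl)
    · split_ifs
      · exact h
      · exact shufflesToFront_cons_iff.2 (.inr ⟨hd, ih h⟩)

theorem ShufflesToFront.of_erase {l c : V × Bool} {w : List (V × Bool)}
    (h : ShufflesToFront Γ l (w.erase c)) (hc : ¬ Γ.Adj l.1 c.1) : ShufflesToFront Γ l w := by
  by_cases hcw : c ∈ w
  · obtain ⟨p, s, -, rfl, he⟩ := exists_erase_eq hcw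
    exact (he ▸ h).insert hc
  · rwa [erase_of_not_mem hcw] at h

open Classical in
variable (Γ) in
noncomputable def reduceCons (l : V × Bool) (w : List (V × Bool)) : List (V × Bool) :=
  if ShufflesToFront Γ (l.1, !l.2) w then w.erase (l.1, !l.2) else l :: w

theorem reduceCons_of_shufflesToFront {l : V × Bool} {w : List (V × Bool)}
    (h : ShufflesToFront Γ (l.1, !l.2) w) : reduceCons Γ l w = w.erase (l.1, !l.2) :=
  if_pos h

theorem reduceCons_of_not_shufflesToFront {l : V × Bool} {w : List (V × Bool)}
    (h : ¬ ShufflesToFront Γ (l.1, !l.2) w) : reduceCons Γ l w = l :: w :=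
  if_neg h

theorem isShuffleReduced_reduceCons {w : List (V × Bool)} (hw : IsShuffleReduced Γ w)
    (l : V × Bool) : IsShuffleReduced Γ (reduceCons Γ l w) := by
  by_cases h : ShufflesToFront Γ (l.1, !l.2) w
  · obtain ⟨m, y, rfl, hm, -, he⟩ := h.exists_first
    rw [reduceCons_of_shufflesToFront h, he]
    exact hw.delete hm
  · rw [reduceCons_of_not_shufflesToFront h]
    exact hw.cons h

theorem wordProd_reduceCons (l : V × Bool) (w : List (V × Bool)) :
    wordProd Γ (reduceCons Γ l w) = letter Γ l * wordProd Γ w := by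
  by_cases h : ShufflesToFront Γ (l.1, !l.2) w
  · obtain ⟨m, y, rfl, hm, -, he⟩ := h.exists_first
    rw [reduceCons_of_shufflesToFront h, he]
    simp only [wordProd_append, wordProd_cons, letter_not, Prod.mk.eta,
      (CommutesWith.commute_wordProd (l := l) hm).left_comm, mul_inv_cancel_left]
  · rw [reduceCons_of_not_shufflesToFront h, wordProd_cons]

theorem reduceCons_subset (l : V × Bool) (w : List (V × Bool)) :
    reduceCons Γ l w ⊆ l :: w := by
  unfold reduceCons
  split_ifs
  · exact subset_cons_of_subset _ erase_subset
  · exact Subset.refl _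

theorem countP_reduceCons_of_shufflesToFront (p : V → Bool) {l : V × Bool}
    {w : List (V × Bool)} (h : ShufflesToFront Γ (l.1, !l.2) w) :
    (reduceCons Γ l w).countP (p ·.1) + (if p l.1 then 1 else 0) = w.countP (p ·.1) := by
  obtain ⟨m, y, rfl, -, -, he⟩ := h.exists_first
  rw [reduceCons_of_shufflesToFront h, he]
  simp only [countP_append, countP_cons]
  omega

variable (Γ) in
noncomputable def normalize (w : List (V × Bool)) : List (V × Bool) :=
  w.foldr (reduceCons Γ) []

@[simp] theorem normalize_nil : normalize Γ [] = [] := rfl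

@[simp] theorem normalize_cons (l : V × Bool) (w : List (V × Bool)) :
    normalize Γ (l :: w) = reduceCons Γ l (normalize Γ w) := rfl

theorem normalize_append (s t : List (V × Bool)) :
    normalize Γ (s ++ t) = s.foldr (reduceCons Γ) (normalize Γ t) :=
  foldr_append

variable (Γ)

theorem isShuffleReduced_normalize (w : List (V × Bool)) :
    IsShuffleReduced Γ (normalize Γ w) := by
  induction w with
  | nil => exact isShuffleReduced_nil
  | cons l w ih => exact isShuffleReduced_reduceCons ih l

theorem wordProd_normalize (w : List (V × Bool)) :
    wordProd Γ (normalize Γ w) = wordProd Γ w := by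
  induction w with
  | nil => rfl
  | cons l w ih => rw [normalize_cons, wordProd_reduceCons, ih, wordProd_cons]

theorem normalize_subset (w : List (V × Bool)) : normalize Γ w ⊆ w := by
  induction w with
  | nil => exact Subset.refl _
  | cons l w ih => exact fun c hc => cons_subset_cons l ih (reduceCons_subset l _ hc)

theorem countP_foldr_reduceCons_le (p : V → Bool) (s x : List (V × Bool)) :
    (s.foldr (reduceCons Γ) x).countP (p ·.1) ≤ x.countP (p ·.1) + s.countP (p ·.1) := by
  induction s with
  | nil => simp
  | cons l s ih =>
    rw [foldr_cons, countP_cons]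
    by_cases h : ShufflesToFront Γ (l.1, !l.2) (s.foldr (reduceCons Γ) x)
    · have := countP_reduceCons_of_shufflesToFront p h
      omega
    · rw [reduceCons_of_not_shufflesToFront h, countP_cons]
      omega

theorem countP_normalize_le (p : V → Bool) (w : List (V × Bool)) :
    (normalize Γ w).countP (p ·.1) ≤ w.countP (p ·.1) := by
  simpa [normalize] using countP_foldr_reduceCons_le Γ p w []

theorem length_normalize_le (w : List (V × Bool)) : (normalize Γ w).length ≤ w.length := by
  simpa using countP_normalize_le Γ (fun _ => true) w

variable {Γ}

theorem normalize_eq_self_of_length_eq {w : List (V × Bool)}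
    (h : (normalize Γ w).length = w.length) : normalize Γ w = w := by
  induction w with
  | nil => rfl
  | cons l w ih =>
    have hle := length_normalize_le Γ w
    by_cases hr : ShufflesToFront Γ (l.1, !l.2) (normalize Γ w)
    · have := countP_reduceCons_of_shufflesToFront (fun _ => true) hr
      simp only [countP_true, normalize_cons, length_cons] at this h
      omega
    · rw [normalize_cons, reduceCons_of_not_shufflesToFront hr] at h ⊢
      rw [ih (by simpa using h)]

/-- The last conjunct says that no `p`-letter of `y` is cancelled while normalizing `y`. -/
theorem exists_rightmost_cancelling_letter (p : V → Bool) {w : List (V × Bool)}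
    (h : (normalize Γ w).countP (p ·.1) < w.countP (p ·.1)) :
    ∃ x l y, w = x ++ l :: y ∧ p l.1 ∧ ShufflesToFront Γ (l.1, !l.2) (normalize Γ y) ∧
      (normalize Γ y).countP (p ·.1) = y.countP (p ·.1) := by
  induction w with
  | nil => simp at h
  | cons l w ih =>
    obtain hlt | heq := (countP_normalize_le Γ p w).lt_or_eq
    · obtain ⟨x, l', y, rfl, hp, hr, hc⟩ := ih hlt
      exact ⟨l :: x, l', y, rfl, hp, hr, hc⟩
    by_cases hr : ShufflesToFront Γ (l.1, !l.2) (normalize Γ w)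
    · refine ⟨[], l, w, rfl, ?_, hr, heq⟩
      have := countP_reduceCons_of_shufflesToFront p hr
      rw [normalize_cons, countP_cons] at h
      by_contra hp
      simp only [hp, if_false] at this h
      omega
    · rw [normalize_cons, reduceCons_of_not_shufflesToFront hr, countP_cons, countP_cons] at h
      omega

theorem ShuffleStep.erase {w w' : List (V × Bool)} (h : ShuffleStep Γ w w') (c : V × Bool) :
    Relation.ReflTransGen (ShuffleStep Γ) (w.erase c) (w'.erase c) := by
  obtain ⟨x, y, a, b, hab, rfl, rfl⟩ := h
  induction x with
  | nil =>
    simp only [nil_append, erase_cons, beq_iff_eq]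
    by_cases ha : a = c <;> by_cases hb : b = c
    · subst ha hb
      exact .refl
    · rw [if_pos ha, if_neg hb, if_pos ha]
    · rw [if_neg ha, if_pos hb, if_pos hb]
    · simp only [ha, hb, if_false]
      exact .single ⟨[], y.erase c, a, b, hab, rfl, rfl⟩
  | cons d x ih =>
    simp only [cons_append, erase_cons]
    split_ifs
    · exact .single ⟨x, y, a, b, hab, rfl, rfl⟩
    · exact ih.lift (d :: ·) fun _ _ h => h.cons d

theorem ShuffleStep.mk_reduceCons_eq {w w' : List (V × Bool)} (h : ShuffleStep Γ w w')
    (l : V × Bool) :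
    Quot.mk (ShuffleStep Γ) (reduceCons Γ l w) = Quot.mk _ (reduceCons Γ l w') := by
  by_cases hr : ShufflesToFront Γ (l.1, !l.2) w
  · rw [reduceCons_of_shufflesToFront hr,
      reduceCons_of_shufflesToFront (h.shufflesToFront_iff.1 hr)]
    exact Quot.eqvGen_sound (Relation.EqvGen.reflTransGen_le_eqvGen _ _ _ (h.erase _))
  · rw [reduceCons_of_not_shufflesToFront hr,
      reduceCons_of_not_shufflesToFront (mt h.shufflesToFront_iff.2 hr)]
    exact Quot.sound (h.cons l)

theorem IsShuffleReduced.mk_reduceCons_reduceCons_not {w : List (V × Bool)}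
    (hw : IsShuffleReduced Γ w) (l : V × Bool) :
    Quot.mk (ShuffleStep Γ) (reduceCons Γ (l.1, !l.2) (reduceCons Γ l w)) = Quot.mk _ w := by
  by_cases h : ShufflesToFront Γ (l.1, !l.2) w
  · obtain ⟨m, y, rfl, hm, hvm, he⟩ := hw.exists_first h
    have hy : ¬ ShufflesToFront Γ l y := fun hy => hw m (l.1, !l.2) y rfl (by simpa using hy)
    have hmy : ¬ ShufflesToFront Γ (l.1, !!l.2) (m ++ y) := fun h' =>
      hy (ShufflesToFront.of_append (by simpa using h') (by simpa using hvm l.2))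
    rw [reduceCons_of_shufflesToFront h, he, reduceCons_of_not_shufflesToFront hmy]
    exact (Quot.eqvGen_sound
      (Relation.EqvGen.reflTransGen_le_eqvGen _ _ _ (reflTransGen_append_cons hm y))).symm
  · have hl : ShufflesToFront Γ (l.1, !!l.2) (l :: w) :=
      shufflesToFront_cons_iff.2 (.inl (by simp))
    rw [reduceCons_of_not_shufflesToFront h, reduceCons_of_shufflesToFront hl]
    simp

theorem reduceCons_comm_of_shufflesToFront_of_not {u v : V} (huv : u ≠ v)
    (hadj : ¬ Γ.Adj u v) {a b : Bool} {w : List (V × Bool)}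
    (hv : ShufflesToFront Γ (v, !b) w) (hu : ¬ ShufflesToFront Γ (u, !a) w) :
    reduceCons Γ (u, a) (reduceCons Γ (v, b) w) =
      reduceCons Γ (v, b) (reduceCons Γ (u, a) w) := by
  have hu' : ¬ ShufflesToFront Γ (u, !a) (w.erase (v, !b)) := fun h => hu (h.of_erase hadj)
  have hv' : ShufflesToFront Γ (v, !b) ((u, a) :: w) :=
    shufflesToFront_cons_iff.2 (.inr ⟨fun h => hadj h.symm, hv⟩)
  rw [reduceCons_of_shufflesToFront (l := (v, b)) hv,
    reduceCons_of_not_shufflesToFront (l := (u, a)) hu',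
    reduceCons_of_not_shufflesToFront (l := (u, a)) hu,
    reduceCons_of_shufflesToFront (l := (v, b)) hv', erase_cons_tail (by simp [huv])]

theorem mk_reduceCons_comm {u v : V} (huv : u ≠ v) (hadj : ¬ Γ.Adj u v) (a b : Bool)
    (w : List (V × Bool)) :
    Quot.mk (ShuffleStep Γ) (reduceCons Γ (u, a) (reduceCons Γ (v, b) w)) =
      Quot.mk _ (reduceCons Γ (v, b) (reduceCons Γ (u, a) w)) := by
  by_cases hv : ShufflesToFront Γ (v, !b) w <;> by_cases hu : ShufflesToFront Γ (u, !a) w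
  · rw [reduceCons_of_shufflesToFront (l := (v, b)) hv,
      reduceCons_of_shufflesToFront (l := (u, a)) (hu.erase (by simp [huv.symm])),
      reduceCons_of_shufflesToFront (l := (u, a)) hu,
      reduceCons_of_shufflesToFront (l := (v, b)) (hv.erase (by simp [huv])), erase_comm]
  · rw [reduceCons_comm_of_shufflesToFront_of_not huv hadj hv hu]
  · rw [reduceCons_comm_of_shufflesToFront_of_not huv.symm (fun h => hadj h.symm) hu hv]
  · have hu' : ¬ ShufflesToFront Γ (u, !a) ((v, b) :: w) := by
      simp [shufflesToFront_cons_iff, hu, huv.symm]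
    have hv' : ¬ ShufflesToFront Γ (v, !b) ((u, a) :: w) := by
      simp [shufflesToFront_cons_iff, hv, huv]
    rw [reduceCons_of_not_shufflesToFront (l := (v, b)) hv,
      reduceCons_of_not_shufflesToFront (l := (u, a)) hu',
      reduceCons_of_not_shufflesToFront (l := (u, a)) hu,
      reduceCons_of_not_shufflesToFront (l := (v, b)) hv']
    exact Quot.sound ⟨[], w, (u, a), (v, b), hadj, rfl, rfl⟩

namespace ReducedClass

noncomputable def act (l : V × Bool) (q : ReducedClass Γ) : ReducedClass Γ :=
  ⟨Quot.lift (fun w => Quot.mk _ (reduceCons Γ l w)) (fun _ _ h => h.mk_reduceCons_eq l) q.1, by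
    obtain ⟨_, w, hw, rfl⟩ := q
    exact ⟨_, isShuffleReduced_reduceCons hw l, rfl⟩⟩

theorem act_not_act (l : V × Bool) (q : ReducedClass Γ) : (q.act l).act (l.1, !l.2) = q := by
  obtain ⟨_, w, hw, rfl⟩ := q
  exact Subtype.ext (hw.mk_reduceCons_reduceCons_not l)

theorem act_comm {u v : V} (huv : u ≠ v) (hadj : ¬ Γ.Adj u v) (a b : Bool)
    (q : ReducedClass Γ) : (q.act (v, b)).act (u, a) = (q.act (u, a)).act (v, b) := by
  obtain ⟨_, w, hw, rfl⟩ := q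
  exact Subtype.ext (mk_reduceCons_comm huv hadj a b w)

noncomputable def perm (v : V) : Equiv.Perm (ReducedClass Γ) where
  toFun := act (v, true)
  invFun := act (v, false)
  left_inv := act_not_act (v, true)
  right_inv := act_not_act (v, false)

end ReducedClass

variable (Γ) in
noncomputable def toPerm : Raag Γ →* Equiv.Perm (ReducedClass Γ) :=
  PresentedGroup.toGroup (f := ReducedClass.perm) <| by
    rintro _ ⟨u, v, huv, hadj, rfl⟩
    have hcomm : ReducedClass.perm u * ReducedClass.perm v =
        ReducedClass.perm v * ReducedClass.perm u :=
      Equiv.ext (ReducedClass.act_comm huv hadj true true)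
    simp only [map_mul, map_inv, FreeGroup.lift_apply_of, hcomm, mul_inv_cancel_right,
      mul_inv_cancel]

theorem toPerm_letter (l : V × Bool) (q : ReducedClass Γ) :
    toPerm Γ (letter Γ l) q = q.act l := by
  obtain ⟨v, _ | _⟩ := l <;> rfl

variable (Γ) in
theorem toPerm_wordProd (w : List (V × Bool)) :
    toPerm Γ (wordProd Γ w) (.mk Γ [] isShuffleReduced_nil) =
      .mk Γ (normalize Γ w) (isShuffleReduced_normalize Γ w) := by
  induction w with
  | nil => simp
  | cons l w ih =>
    rw [wordProd_cons, map_mul, Equiv.Perm.mul_apply, ih, toPerm_letter]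
    rfl

theorem normalize_perm_of_wordProd_eq {w z : List (V × Bool)} (h : wordProd Γ w = wordProd Γ z) :
    (normalize Γ w).Perm (normalize Γ z) := by
  have hq := congrArg Subtype.val
    ((toPerm_wordProd Γ w).symm.trans ((congrArg (toPerm Γ · _) h).trans (toPerm_wordProd Γ z)))
  exact (Perm.eqv _).eqvGen_iff.1
    (Relation.EqvGen.mono (fun _ _ h => h.perm) _ _ (Quot.eqvGen_exact hq))

variable (Γ) in
theorem isReducedWord_normalize (w : List (V × Bool)) : IsReducedWord Γ (normalize Γ w) := by
  intro z hz
  rw [wordProd_normalize] at hz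
  rw [← (normalize_perm_of_wordProd_eq hz).length_eq]
  exact length_normalize_le Γ z

theorem normalize_eq_self_of_isReducedWord {w : List (V × Bool)} (hw : IsReducedWord Γ w) :
    normalize Γ w = w :=
  normalize_eq_self_of_length_eq
    ((length_normalize_le Γ w).antisymm (hw _ (wordProd_normalize Γ w)))

end Normalize

theorem exists_mem_of_mem_raagSupp {u : V} {w : List (V × Bool)}
    (hu : u ∈ raagSupp Γ (wordProd Γ w)) : ∃ b, (u, b) ∈ w := by
  classical
  obtain ⟨r, hr, hrw, b, hb⟩ := hu
  rw [← normalize_eq_self_of_isReducedWord hr] at hb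
  exact ⟨b, normalize_subset Γ w ((normalize_perm_of_wordProd_eq hrw).mem_iff.1 hb)⟩

section Cancellation

variable [DecidableEq V]

theorem exists_reduceCons_append_cons {c : V × Bool} {v : V} (hcv : c.1 ≠ v) (γ : Bool)
    (a b : List (V × Bool)) :
    ∃ a' b' d, reduceCons Γ c (a ++ (v, γ) :: b) = a' ++ (v, γ) :: b' ∧ a' ⊆ c :: a ∧
      CommutesWith Γ v d ∧ letter Γ c * wordProd Γ a = wordProd Γ (a' ++ d) := by
  by_cases hr : ShufflesToFront Γ (c.1, !c.2) (a ++ (v, γ) :: b)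
  swap
  · rw [reduceCons_of_not_shufflesToFront hr]
    exact ⟨c :: a, b, [], rfl, Subset.refl _, commutesWith_nil v, by simp⟩
  obtain ⟨m, y, hmy, hm, -, he⟩ := hr.exists_first
  rw [reduceCons_of_shufflesToFront hr, he]
  rcases append_eq_append_iff.1 hmy with ⟨_ | ⟨e, t⟩, rfl, h⟩ | ⟨_ | ⟨e, t⟩, rfl, h⟩
  · exact absurd (congrArg Prod.fst (cons.inj h).1) hcv.symm
  · obtain ⟨rfl, rfl⟩ := cons.inj h
    obtain ⟨hma, hmv⟩ := commutesWith_append.1 hm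
    have hvc : ¬ Γ.Adj v c.1 := fun h => (commutesWith_cons.1 hmv).1 h.symm
    refine ⟨a, t ++ y, [c], by simp, subset_cons_self _ _, by simpa using hvc, ?_⟩
    simp [(CommutesWith.commute_wordProd (l := c) hma).eq]
  · exact absurd (congrArg Prod.fst (cons.inj h).1) hcv
  · obtain ⟨rfl, rfl⟩ := cons.inj h
    refine ⟨m ++ t, b, [], by simp, fun x hx => ?_, commutesWith_nil v, ?_⟩
    · simp only [mem_append, mem_cons] at hx ⊢
      tauto
    · simp [(CommutesWith.commute_wordProd (l := c) hm).left_comm, letter_not]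

theorem exists_split_foldr_reduceCons {v : V} {s : List (V × Bool)} (hs : ∀ β, (v, β) ∉ s)
    (γ : Bool) (t : List (V × Bool)) :
    ∃ a b d, s.foldr (reduceCons Γ) ((v, γ) :: t) = a ++ (v, γ) :: b ∧
      (∀ β, (v, β) ∉ a) ∧ CommutesWith Γ v d ∧ wordProd Γ s = wordProd Γ (a ++ d) := by
  induction s with
  | nil => exact ⟨[], t, [], rfl, fun _ => not_mem_nil, commutesWith_nil v, rfl⟩
  | cons c s ih =>
    have hcv : c.1 ≠ v := by
      rintro rfl
      exact hs c.2 mem_cons_self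
    obtain ⟨a, b, d, hab, ha, hd, hprod⟩ := ih fun β h => hs β (mem_cons_of_mem _ h)
    obtain ⟨a', b', d', he, ha', hd', hc⟩ := exists_reduceCons_append_cons hcv γ a b
    refine ⟨a', b', d' ++ d, by rw [foldr_cons, hab, he], fun β h => ?_,
      commutesWith_append.2 ⟨hd', hd⟩, ?_⟩
    · rcases mem_cons.1 (ha' h) with h | h
      · exact hcv (congrArg Prod.fst h).symm
      · exact ha β h
    · rw [wordProd_cons, hprod, wordProd_append, ← mul_assoc, hc]
      simp [mul_assoc]

theorem hasInnermostCancellationOf_of_shufflesToFront_normalize {v : V} {ε : Bool}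
    {x t : List (V × Bool)} (hR : ShufflesToFront Γ (v, !ε) (normalize Γ t))
    (hcount : (normalize Γ t).countP (·.1 = v) = t.countP (·.1 = v)) :
    HasInnermostCancellationOf Γ (x ++ (v, ε) :: t) v := by
  obtain ⟨β, hβ⟩ : ∃ β, (v, β) ∈ t := ⟨!ε, normalize_subset Γ t (by
    obtain ⟨m, y, h, -⟩ := hR
    simp [h])⟩
  obtain ⟨s, δ, t', rfl, hs⟩ := exists_first_vertex hβ
  have hsv : s.countP (·.1 = v) = 0 := countP_eq_zero.2 fun c hc hcv => hs c.2 (by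
    rw [← of_decide_eq_true hcv]
    exact hc)
  -- by `hcount` no `v`-letter of `t` is cancelled, in particular not the first one
  have hkept : ¬ ShufflesToFront Γ (v, !δ) (normalize Γ t') := fun h => by
    have h₁ := countP_reduceCons_of_shufflesToFront (l := (v, δ)) (fun u => decide (u = v)) h
    have h₂ := countP_foldr_reduceCons_le Γ (fun u => decide (u = v)) s
      (reduceCons Γ (v, δ) (normalize Γ t'))
    have h₃ := countP_normalize_le Γ (fun u => decide (u = v)) t'
    rw [normalize_append, normalize_cons] at hcount
    simp only [countP_append, countP_cons, decide_true, if_true] at hcount h₁ h₂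
    omega
  have hred := isShuffleReduced_normalize Γ (s ++ (v, δ) :: t')
  obtain ⟨a, b, d, hab, ha, hd, hprod⟩ := exists_split_foldr_reduceCons hs δ (normalize Γ t')
  rw [normalize_append, normalize_cons, reduceCons_of_not_shufflesToFront hkept, hab]
    at hR hred
  obtain ⟨m, y, hmy, hm, hmv, -⟩ := hred.exists_first hR
  obtain ⟨rfl, rfl⟩ := append_cons_inj_of_forall_not_mem hmy ha hmv
  refine ⟨x, s, t', ε, by simp, fun u hu => ?_, hs⟩
  obtain ⟨β, hβ⟩ := exists_mem_of_mem_raagSupp (hprod ▸ hu)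
  rcases mem_append.1 hβ with h | h
  · exact hm _ h
  · exact hd _ h

end Cancellation

theorem hasInnermostCancellationOf_of_not_mem_raagSupp {w : List (V × Bool)} {v : V} {β : Bool}
    (hv : (v, β) ∈ w) (hsupp : v ∉ raagSupp Γ (wordProd Γ w)) :
    HasInnermostCancellationOf Γ w v := by
  classical
  have hnf : (normalize Γ w).countP (·.1 = v) = 0 := countP_eq_zero.2 fun c hc hcv =>
    hsupp ⟨normalize Γ w, isReducedWord_normalize Γ w, wordProd_normalize Γ w, c.2, by
      rw [← of_decide_eq_true hcv]
      exact hc⟩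
  have hw : 0 < w.countP (·.1 = v) := countP_pos_iff.2 ⟨_, hv, by simp⟩
  obtain ⟨x, ⟨u, ε⟩, t, rfl, hu, hR, hcount⟩ :=
    exists_rightmost_cancelling_letter (fun u => decide (u = v)) (hnf ▸ hw)
  obtain rfl : u = v := of_decide_eq_true hu
  exact hasInnermostCancellationOf_of_shufflesToFront_normalize hR hcount

theorem exists_hasInnermostCancellationOf_of_not_isReducedWord {w : List (V × Bool)}
    (hw : ¬ IsReducedWord Γ w) : ∃ v, HasInnermostCancellationOf Γ w v := by
  classical
  obtain ⟨z, hz, hlt⟩ : ∃ z, wordProd Γ z = wordProd Γ w ∧ z.length < w.length := by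
    simpa [IsReducedWord] using hw
  have hlen : (normalize Γ w).countP (fun _ => true) < w.countP (fun _ => true) := by
    rw [countP_true, ← (normalize_perm_of_wordProd_eq hz).length_eq]
    exact (length_normalize_le Γ z).trans_lt hlt
  obtain ⟨x, ⟨v, ε⟩, t, rfl, -, hR, hcount⟩ :=
    exists_rightmost_cancelling_letter (fun _ => true) hlen
  have ht : normalize Γ t = t := normalize_eq_self_of_length_eq (by simpa using hcount)
  exact ⟨v, hasInnermostCancellationOf_of_shufflesToFront_normalize hR (by rw [ht])⟩

end Raag

theorem HasInnermostCancellationOf.hasCancellationOf {V : Type*} {Γ : SimpleGraph V}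
    {w : List (V × Bool)} {v : V} (h : HasInnermostCancellationOf Γ w v) :
    HasCancellationOf Γ w v :=
  let ⟨w₁, w', w₂, b, hw, hsupp, _⟩ := h
  ⟨w₁, w', w₂, b, hw, hsupp⟩

theorem cancellation_of_dead_letter_general {V : Type} (Γ : SimpleGraph V) :
    (∀ (w : List (V × Bool)) (v : V),
      (∃ b, (v, b) ∈ w) → v ∉ raagSupp Γ (wordProd Γ w) →
        HasCancellationOf Γ w v ∧ HasInnermostCancellationOf Γ w v) ∧
    (∀ w : List (V × Bool), ¬ IsReducedWord Γ w →
      ∃ v : V, HasInnermostCancellationOf Γ w v) := by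
  refine ⟨fun w v ⟨b, hv⟩ hsupp => ?_,
    fun w hw => Raag.exists_hasInnermostCancellationOf_of_not_isReducedWord hw⟩
  have h := Raag.hasInnermostCancellationOf_of_not_mem_raagSupp hv hsupp
  exact ⟨h.hasCancellationOf, h⟩

/-- If `v` or `v⁻¹` occurs as a letter of a word `w` but `v ∉ supp(g)` for the
element `g` represented by `w`, then `w` contains a cancellation of `v`, and hence an innermost
cancellation of `v`.  Consequently every non-reduced word contains an innermost cancellation of
some vertex. -/
theorem cancellation_of_dead_letter {V : Type} [Fintype V] (Γ : SimpleGraph V) :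
    (∀ (w : List (V × Bool)) (v : V),
      (∃ b, (v, b) ∈ w) → v ∉ raagSupp Γ (wordProd Γ w) →
        HasCancellationOf Γ w v ∧ HasInnermostCancellationOf Γ w v) ∧
    (∀ w : List (V × Bool), ¬ IsReducedWord Γ w →
      ∃ v : V, HasInnermostCancellationOf Γ w v) :=
  cancellation_of_dead_letter_general Γ
end
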